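/- Any nonnegative weighted sum of functions of the form η ↦ f(c_m · η_m), where f(x) = -e^{1/x} Ei(-1/x) and c_m > 0, is concave on the positive orthant; consequently, the objective η ↦ Σ_{m=1}^M f(c_m η_m) of Problem 3 is a concave function on {η : 0 ≤ η_m ≤ 1}. -/

import Mathlib

/-!
Substituting `t = s + 1/x` in `Ei` gives, for `x ≥ 0`,
`f x = ∫₀^∞ x e^{-s} / (x s + 1) ds`.
For each fixed `s ≥ 0` the integrand `x ↦ x / (x s + 1)` is concave on `[0, ∞)`, and an integral
of concave functions is concave. Composing with the linear maps `η ↦ c_m η_m` and summing with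
nonnegative weights preserves concavity.
-/

open MeasureTheory

/-- The exponential integral: for `z < 0`, `Ei z = -∫_{-z}^∞ e^{-t}/t dt`. -/
noncomputable def Ei (z : ℝ) : ℝ := -(∫ t in Set.Ioi (-z), Real.exp (-t) / t)

/-- `f x = -e^{1/x} Ei(-1/x)`, extended continuously by `f(0) = 0` to `x ≤ 0`. -/
noncomputable def fext (x : ℝ) : ℝ :=
  if 0 < x then -Real.exp (1/x) * Ei (-(1/x)) else 0

open Set Real

theorem ConcaveOn.finset_sum {ι E : Type*} [AddCommMonoid E] [Module ℝ E] {s : Set E}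
    {t : Finset ι} {f : ι → E → ℝ} (hs : Convex ℝ s) (hf : ∀ i ∈ t, ConcaveOn ℝ s (f i)) :
    ConcaveOn ℝ s fun x => ∑ i ∈ t, f i x := by
  classical
  induction t using Finset.induction_on with
  | empty => simpa using concaveOn_const 0 hs
  | insert i t hi ih =>
    simp only [Finset.sum_insert hi]
    exact (hf i (t.mem_insert_self i)).add (ih fun j hj => hf j (Finset.mem_insert_of_mem hj))

theorem ConcaveOn.integral {α E : Type*} [MeasurableSpace α] [AddCommMonoid E] [Module ℝ E]
    {μ : Measure α} {s : Set E} {g : E → α → ℝ} (hs : Convex ℝ s)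
    (hint : ∀ x ∈ s, Integrable (g x) μ) (hg : ∀ᵐ a ∂μ, ConcaveOn ℝ s fun x => g x a) :
    ConcaveOn ℝ s fun x => ∫ a, g x a ∂μ := by
  refine ⟨hs, fun x hx y hy p q hp hq hpq => ?_⟩
  simp only [smul_eq_mul]
  rw [← integral_const_mul, ← integral_const_mul,
    ← integral_add ((hint x hx).const_mul p) ((hint y hy).const_mul q)]
  refine integral_mono_ae (((hint x hx).const_mul p).add ((hint y hy).const_mul q))
    (hint _ (hs hx hy hp hq hpq)) ?_
  filter_upwards [hg] with a ha
  exact ha.2 hx hy hp hq hpq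

theorem concaveOn_div_mul_add_one {s : ℝ} (hs : 0 ≤ s) :
    ConcaveOn ℝ (Ici 0) fun x => x / (x * s + 1) := by
  refine ⟨convex_Ici 0, fun x (hx : 0 ≤ x) y (hy : 0 ≤ y) p q hp hq hpq => ?_⟩
  simp only [smul_eq_mul]
  have hdx : 0 < x * s + 1 := by positivity
  have hdy : 0 < y * s + 1 := by positivity
  have hdz : 0 < (p * x + q * y) * s + 1 := by positivity
  rw [mul_div_assoc', mul_div_assoc', div_add_div _ _ hdx.ne' hdy.ne',
    div_le_div_iff₀ (mul_pos hdx hdy) hdz]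
  obtain rfl : q = 1 - p := by linarith
  -- the defect of the concavity inequality is `p (1 - p) s (x - y)²`
  nlinarith [mul_nonneg (mul_nonneg (mul_nonneg hp hq) hs) (sq_nonneg (x - y))]

theorem integrableOn_mul_exp_neg_div {x : ℝ} (hx : 0 ≤ x) :
    IntegrableOn (fun s => x * exp (-s) / (x * s + 1)) (Ioi 0) := by
  refine ((exp_neg_integrableOn_Ioi 0 one_pos).const_mul x).mono' ?_ ?_
  · refine ContinuousOn.aestronglyMeasurable ?_ measurableSet_Ioi
    exact ContinuousOn.div (by fun_prop) (by fun_prop) fun s (hs : 0 < s) => by positivity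
  · filter_upwards [ae_restrict_mem measurableSet_Ioi] with s (hs : 0 < s)
    rw [norm_of_nonneg (by positivity), neg_one_mul]
    exact div_le_self (by positivity) (by nlinarith [mul_nonneg hx hs.le])

theorem fext_eq_integral {x : ℝ} (hx : 0 ≤ x) :
    fext x = ∫ s in Ioi 0, x * exp (-s) / (x * s + 1) := by
  rcases hx.eq_or_lt with rfl | hx
  · simp [fext]
  have hshift : ∫ t in Ioi (1 / x), exp (-t) / t
      = ∫ s in Ioi 0, exp (-(s + 1 / x)) / (s + 1 / x) := by
    rw [← (measurePreserving_add_right volume (1 / x)).setIntegral_preimage_emb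
      (measurableEmbedding_addRight (1 / x)), preimage_add_const_Ioi, sub_self]
  rw [fext, if_pos hx, Ei, neg_neg, neg_mul_neg, hshift, ← integral_const_mul]
  refine setIntegral_congr_fun measurableSet_Ioi fun s (hs : 0 < s) => ?_
  have hexp : exp (1 / x) * exp (-(s + 1 / x)) = exp (-s) := by
    rw [← exp_add]; ring_nf
  rw [← mul_div_assoc, hexp]
  field_simp

theorem concaveOn_fext : ConcaveOn ℝ (Ici 0) fext := by
  refine (ConcaveOn.integral (convex_Ici 0) (fun x hx => integrableOn_mul_exp_neg_div hx) ?_).congr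
    fun x hx => (fext_eq_integral hx).symm
  filter_upwards [ae_restrict_mem measurableSet_Ioi] with s (hs : 0 < s)
  refine ((concaveOn_div_mul_add_one hs.le).smul (exp_pos (-s)).le).congr fun x _ => ?_
  simp only [smul_eq_mul]
  ring

theorem concaveOn_fext_mul_apply {ι : Type*} {c : ℝ} (hc : 0 ≤ c) (i : ι) :
    ConcaveOn ℝ {η : ι → ℝ | ∀ j, 0 ≤ η j} fun η => fext (c * η i) :=
  (concaveOn_fext.comp_linearMap (c • LinearMap.proj (R := ℝ) (φ := fun _ : ι => ℝ) i)).subset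
    (fun _ hη => mul_nonneg hc (hη i)) (convex_Ici (0 : ι → ℝ))

/-- A nonnegative weighted sum of functions `η ↦ f (c m * η m)` with `c m > 0` is
concave on the nonnegative orthant; consequently, the objective
`η ↦ ∑ m, f (c m * η m)` of Problem 3 is concave on `{η : ∀ m, 0 ≤ η m ≤ 1}`. -/
theorem stmt_6 (M : ℕ) (c a : Fin M → ℝ) (hc : ∀ m, 0 < c m) (ha : ∀ m, 0 ≤ a m) :
    ConcaveOn ℝ {η : Fin M → ℝ | ∀ m, 0 ≤ η m}
      (fun η => ∑ m, a m * fext (c m * η m)) ∧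
    ConcaveOn ℝ {η : Fin M → ℝ | ∀ m, 0 ≤ η m ∧ η m ≤ 1}
      (fun η => ∑ m, fext (c m * η m)) := by
  have hsum : ∀ w : Fin M → ℝ, (∀ m, 0 ≤ w m) →
      ConcaveOn ℝ {η : Fin M → ℝ | ∀ m, 0 ≤ η m} fun η => ∑ m, w m * fext (c m * η m) :=
    fun w hw => ConcaveOn.finset_sum (convex_Ici 0) fun m _ =>
      (concaveOn_fext_mul_apply (hc m).le m).smul (hw m)
  have hbox : Convex ℝ {η : Fin M → ℝ | ∀ m, 0 ≤ η m ∧ η m ≤ 1} := by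
    rw [show {η : Fin M → ℝ | ∀ m, 0 ≤ η m ∧ η m ≤ 1} = Icc 0 1 from ext fun _ => forall_and]
    exact convex_Icc 0 1
  refine ⟨hsum a ha, ?_⟩
  simpa using (hsum 1 fun _ => zero_le_one).subset (fun η hη m => (hη m).1) hbox
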